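/- arXiv:1403.6691 — 4 statements merged into one kernel-verified Lean document; each statement's English description precedes it below -/
import Mathlib

section
/- Let R be a discrete valuation ring with maximal ideal (π), field of fractions K, and residue field k = R/(π). Let A be an R-algebra that is free of finite rank as an R-module, and let X, Y be A-modules that are free of finite rank over R. Let M be a K⊗A-submodule of K⊗Y. If Hom_{K⊗A}(K⊗X, (K⊗Y)/M) ≠ 0, then there exists a k⊗A-submodule N of k⊗Y such that Hom_{k⊗A}(k⊗X, (k⊗Y)/N) ≠ 0. -/
open TensorProduct

noncomputable section

variable (R : Type) [CommRing R]
variable (S : Type) [CommRing S] [Algebra R S]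
variable (A : Type) [Ring A] [Algebra R A]
variable (X : Type) [AddCommGroup X] [Module R X] [Module A X] [IsScalarTower R A X]

/-- The standard `R`-module structure on `S ⊗[R] X` (recorded before any new instances). -/
abbrev stdRMod : Module R (S ⊗[R] X) := inferInstance

/-- The standard scalar tower (recorded before any new instances). -/
abbrev stdRSTower : IsScalarTower R S (S ⊗[R] X) := inferInstance

/-- The action of `a : A` on `S ⊗[R] X`, obtained by base change of the action on `X`. -/
def smulBC (a : A) : S ⊗[R] X →ₗ[S] S ⊗[R] X :=
  LinearMap.baseChange S
    { toFun := fun x => a • x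
      map_add' := fun x y => smul_add a x y
      map_smul' := fun r x => smul_comm a r x }

@[simp] lemma smulBC_tmul (a : A) (s : S) (x : X) :
    smulBC R S A X a (s ⊗ₜ[R] x) = s ⊗ₜ[R] (a • x) := rfl

/-- `S ⊗[R] X` is an `A`-module. -/
instance extModule : Module A (S ⊗[R] X) where
  smul a z := smulBC R S A X a z
  one_smul z := by
    show smulBC R S A X 1 z = z
    induction z using TensorProduct.induction_on with
    | zero => simp
    | tmul s x => simp
    | add u v hu hv => rw [map_add, hu, hv]
  mul_smul a b z := by
    show smulBC R S A X (a * b) z = smulBC R S A X a (smulBC R S A X b z)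
    induction z using TensorProduct.induction_on with
    | zero => simp
    | tmul s x => simp [mul_smul]
    | add u v hu hv => rw [map_add, hu, hv, map_add, map_add]
  smul_zero a := map_zero _
  smul_add a u v := map_add _ u v
  add_smul a b z := by
    show smulBC R S A X (a + b) z = smulBC R S A X a z + smulBC R S A X b z
    induction z using TensorProduct.induction_on with
    | zero => simp
    | tmul s x => simp [add_smul, TensorProduct.tmul_add]
    | add u v hu hv =>
        rw [map_add, hu, hv, map_add, map_add]
        abel
  zero_smul z := by
    show smulBC R S A X 0 z = 0
    induction z using TensorProduct.induction_on with
    | zero => simp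
    | tmul s x => simp
    | add u v hu hv => rw [map_add, hu, hv, add_zero]

lemma extModule_smul_def (a : A) (z : S ⊗[R] X) : a • z = smulBC R S A X a z := rfl

instance extSMulComm : SMulCommClass S A (S ⊗[R] X) :=
  ⟨fun s a z => (map_smul (smulBC R S A X a) s z).symm⟩

instance extTower : IsScalarTower R A (S ⊗[R] X) := by
  constructor
  intro r a z
  rw [extModule_smul_def, extModule_smul_def]
  induction z using TensorProduct.induction_on with
  | zero => exact (smul_zero r).symm
  | tmul s x => simp [smul_assoc, TensorProduct.tmul_smul]
  | add u v hu hv => rw [map_add, hu, hv, map_add, smul_add]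

/-- `S ⊗[R] X` is a module over the base-changed algebra `S ⊗[R] A`. -/
instance extAlgModule : Module (S ⊗[R] A) (S ⊗[R] X) :=
  @TensorProduct.Algebra.module R S A (S ⊗[R] X) _ _ (stdRMod R S X) _ _ _
    (extModule R S A X) _ _ (stdRSTower R S X) (extTower R S A X) (extSMulComm R S A X)

end

/-!
Let `L ⊆ Y` be the `A`-stable lattice of those `y` with `1 ⊗ y ∈ M`. Since `M` is a `K`-subspace,
`Y ⧸ L` is torsion-free, hence a free `R`-module `Q`, and right exactness of the tensor product
identifies `(K ⊗ Y) ⧸ M` with `K ⊗ Q` and `(k ⊗ Y) ⧸ N` with `k ⊗ Q`, where `N` is spanned by the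
image of `L`. A nonzero `K ⊗ A`-map `K ⊗ X → K ⊗ Q`, restricted to `X` and divided by one of its
coordinates of maximal valuation, becomes an `A`-linear map `X → Q` with a value having some
coordinate equal to `1`; so its reduction `k ⊗ X → k ⊗ Q` is still nonzero.
-/

-- For `A := R`, `extModule` would be a second `R`-module structure on `S ⊗[R] X`.
attribute [-instance] extModule extTower

open TensorProduct Submodule

section ValuationRing

variable {R K : Type*} [CommRing R] [IsDomain R] [ValuationRing R] [Field K] [Algebra R K]
  [IsFractionRing R K]

/-- Rescaling by the inverse of an entry of maximal valuation. -/
theorem ValuationRing.exists_mul_isInteger_and_eq_one {ι : Type*} [Finite ι] {t : ι → K}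
    (ht : t ≠ 0) : ∃ c : K, (∀ i, IsLocalization.IsInteger R (c * t i)) ∧ ∃ i, c * t i = 1 := by
  set v := ValuationRing.valuation R K
  obtain ⟨j, hj⟩ := Function.ne_iff.mp ht
  have : Nonempty ι := ⟨j⟩
  obtain ⟨i₀, hi₀⟩ := Finite.exists_max fun i => v (t i)
  have h₀ : t i₀ ≠ 0 := by
    intro h
    have := hi₀ j
    rw [h, map_zero, le_zero_iff, map_eq_zero] at this
    exact hj this
  refine ⟨(t i₀)⁻¹, fun i => ?_, i₀, inv_mul_cancel₀ h₀⟩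
  have : (t i₀)⁻¹ * t i ∈ v.integer := by
    rw [Valuation.mem_integer_iff, map_mul, map_inv₀]
    exact inv_mul_le_one_of_le₀ (hi₀ i) zero_le
  obtain ⟨r, hr⟩ := (ValuationRing.mem_integer_iff R K _).mp this
  exact ⟨r, hr⟩

end ValuationRing

section ExtensionOfScalars

variable {R : Type} [CommRing R] {S : Type} [CommRing S] [Algebra R S]
  {A : Type} [Ring A] [Algebra R A]
  {X : Type} [AddCommGroup X] [Module R X] [Module A X] [IsScalarTower R A X]
  {Z : Type} [AddCommGroup Z] [Module R Z] [Module A Z] [IsScalarTower R A Z]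

theorem tmul_smul_eq_smul_smulBC (s : S) (a : A) (m : S ⊗[R] X) :
    (s ⊗ₜ[R] a) • m = s • smulBC R S A X a m := rfl

theorem tmul_one_smul (s : S) (m : S ⊗[R] X) : (s ⊗ₜ[R] (1 : A)) • m = s • m := by
  rw [tmul_smul_eq_smul_smulBC]
  congr 1
  induction m using TensorProduct.induction_on with
  | zero => exact map_zero _
  | tmul s x => simp
  | add u v hu hv => rw [map_add, hu, hv]

theorem one_tmul_smul (a : A) (m : S ⊗[R] X) : ((1 : S) ⊗ₜ[R] a) • m = smulBC R S A X a m :=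
  one_smul S _

theorem map_smul_of_tensorProduct (f : S ⊗[R] X →ₗ[S ⊗[R] A] S ⊗[R] Z) (s : S) (m : S ⊗[R] X) :
    f (s • m) = s • f m := by
  rw [← tmul_one_smul (A := A), f.map_smul, tmul_one_smul]

theorem smul_mem_of_tensorProduct (M : Submodule (S ⊗[R] A) (S ⊗[R] Z)) (s : S)
    {m : S ⊗[R] Z} (hm : m ∈ M) : s • m ∈ M :=
  tmul_one_smul (A := A) s m ▸ M.smul_mem _ hm

theorem baseChange_smulBC (φ : X →ₗ[A] Z) (a : A) (m : S ⊗[R] X) :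
    (φ.restrictScalars R).baseChange S (smulBC R S A X a m) =
      smulBC R S A Z a ((φ.restrictScalars R).baseChange S m) := by
  induction m using TensorProduct.induction_on with
  | zero => simp only [map_zero]
  | tmul s x => simp
  | add u v hu hv => simp only [map_add, hu, hv]

variable (R S) in
def LinearMap.baseChangeTensor (φ : X →ₗ[A] Z) : S ⊗[R] X →ₗ[S ⊗[R] A] S ⊗[R] Z where
  toFun := (φ.restrictScalars R).baseChange S
  map_add' := map_add _
  map_smul' c m := by
    induction c using TensorProduct.induction_on with
    | zero => simp only [zero_smul, map_zero]
    | tmul s a =>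
      simp only [tmul_smul_eq_smul_smulBC, map_smul, baseChange_smulBC, RingHom.id_apply]
    | add c d hc hd => simp only [add_smul, map_add, hc, hd, RingHom.id_apply]

theorem LinearMap.coe_baseChangeTensor (φ : X →ₗ[A] Z) :
    ⇑(φ.baseChangeTensor R S) = (φ.restrictScalars R).baseChange S := rfl

theorem LinearMap.baseChangeTensor_surjective {φ : X →ₗ[A] Z} (hφ : Function.Surjective φ) :
    Function.Surjective (φ.baseChangeTensor R S) :=
  LinearMap.lTensor_surjective S (g := φ.restrictScalars R) hφ

theorem LinearMap.baseChangeTensor_ne_zero [Nontrivial S] (φ : X →ₗ[A] Z) {x : X}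
    {ℓ : Z →ₗ[R] R} (hx : ℓ (φ x) = 1) : φ.baseChangeTensor R S ≠ 0 := by
  intro h0
  have h1 : ℓ.baseChange S (φ.baseChangeTensor R S (1 ⊗ₜ x)) = (1 : S) ⊗ₜ[R] (1 : R) := by
    simp [coe_baseChangeTensor, hx]
  rw [h0, LinearMap.zero_apply, map_zero] at h1
  exact one_ne_zero (α := S) (by simpa using congrArg (TensorProduct.rid R S) h1.symm)

variable (S) in
def LinearMap.restrictOneTmul (f : S ⊗[R] X →ₗ[S ⊗[R] A] S ⊗[R] Z) : X →ₗ[R] S ⊗[R] Z where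
  toFun x := f (1 ⊗ₜ x)
  map_add' x y := by rw [tmul_add, map_add]
  map_smul' r x := by
    rw [tmul_smul, ← algebraMap_smul S, map_smul_of_tensorProduct, algebraMap_smul,
      RingHom.id_apply]

theorem LinearMap.restrictOneTmul_smul (f : S ⊗[R] X →ₗ[S ⊗[R] A] S ⊗[R] Z) (a : A) (x : X) :
    f.restrictOneTmul S (a • x) = smulBC R S A Z a (f.restrictOneTmul S x) := by
  change f (1 ⊗ₜ (a • x)) = _
  rw [← smulBC_tmul, ← one_tmul_smul, f.map_smul, one_tmul_smul]
  rfl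

theorem LinearMap.restrictOneTmul_ne_zero {f : S ⊗[R] X →ₗ[S ⊗[R] A] S ⊗[R] Z} (hf : f ≠ 0) :
    f.restrictOneTmul S ≠ 0 := by
  contrapose! hf
  ext m
  induction m using TensorProduct.induction_on with
  | zero => exact map_zero f
  | tmul s x =>
    have hx : f (1 ⊗ₜ x) = 0 := LinearMap.congr_fun hf x
    rw [← mul_one s, ← smul_eq_mul, ← smul_tmul', map_smul_of_tensorProduct, hx, smul_zero,
      LinearMap.zero_apply]
  | add u v hu hv => simp only [map_add, hu, hv, LinearMap.zero_apply, add_zero]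

end ExtensionOfScalars

section Lattice

variable {R K : Type*} [CommRing R] [IsDomain R] [ValuationRing R] [Field K] [Algebra R K]
  [IsFractionRing R K]
  {Q : Type*} [AddCommGroup Q] [Module R Q] [Module.Free R Q] [Module.Finite R Q]

theorem exists_smul_eq_one_tmul_of_ne_zero {ι : Type*} [Finite ι] {v : ι → K ⊗[R] Q}
    (hv : v ≠ 0) : ∃ (c : K) (w : ι → Q),
      (∀ i, (1 : K) ⊗ₜ[R] w i = c • v i) ∧ ∃ i, ∃ ℓ : Q →ₗ[R] R, ℓ (w i) = 1 := by
  classical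
  set b := Module.Free.chooseBasis R Q
  set bK := Algebra.TensorProduct.basis K b
  obtain ⟨i, hi⟩ := Function.ne_iff.mp hv
  obtain ⟨j, hj⟩ := Finsupp.ne_iff.mp (bK.repr.map_ne_zero_iff.mpr hi)
  obtain ⟨c, hc, ⟨i₀, j₀⟩, hc₀⟩ := ValuationRing.exists_mul_isInteger_and_eq_one (R := R)
    (t := fun p : ι × _ => bK.repr (v p.1) p.2) (Function.ne_iff.mpr ⟨(i, j), hj⟩)
  choose r hr using hc
  refine ⟨c, fun i => b.repr.symm (Finsupp.equivFunOnFinite.symm fun j => r (i, j)),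
    fun i => bK.repr.injective ?_, i₀, b.coord j₀, IsFractionRing.injective R K ?_⟩
  · ext j
    simp [bK, hr]
  · simp [hr, hc₀]

theorem exists_linearMap_smul_eq_one_tmul_of_ne_zero {X : Type*} [AddCommGroup X] [Module R X]
    [Module.Finite R X] {φ : X →ₗ[R] K ⊗[R] Q} (hφ : φ ≠ 0) : ∃ (c : K) (h : X →ₗ[R] Q),
      (∀ x, (1 : K) ⊗ₜ[R] h x = c • φ x) ∧ ∃ x, ∃ ℓ : Q →ₗ[R] R, ℓ (h x) = 1 := by
  obtain ⟨s, hs⟩ := Module.Finite.fg_top (R := R) (M := X)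
  have hv : (fun x : s => φ x) ≠ 0 := by
    contrapose! hφ
    exact LinearMap.ext_on hs fun x hx => congr_fun hφ ⟨x, hx⟩
  obtain ⟨c, w, hw, x₀, ℓ, hℓ⟩ := exists_smul_eq_one_tmul_of_ne_zero hv
  set ρ := TensorProduct.mk R K Q 1
  have hρ : Function.Injective ρ := Module.Flat.tensorProduct_mk_injective R Q K
  have hrange : LinearMap.range (c • φ) ≤ LinearMap.range ρ := by
    rw [LinearMap.range_eq_map, ← hs, Submodule.map_span_le]
    exact fun x hx => ⟨w ⟨x, hx⟩, hw ⟨x, hx⟩⟩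
  set h := (LinearEquiv.ofInjective ρ hρ).symm.toLinearMap ∘ₗ
    Submodule.inclusion hrange ∘ₗ (c • φ).rangeRestrict
  have hh : ∀ x, ρ (h x) = c • φ x := fun x =>
    congrArg Subtype.val ((LinearEquiv.ofInjective ρ hρ).apply_symm_apply _)
  refine ⟨c, h, hh, x₀, ℓ, ?_⟩
  rwa [show h x₀ = w x₀ from hρ ((hh x₀).trans (hw x₀).symm)]

end Lattice

theorem exists_linearMap_apply_eq_one_of_ne_zero {R K : Type} [CommRing R] [IsDomain R]
    [ValuationRing R] [Field K] [Algebra R K] [IsFractionRing R K]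
    {A : Type} [Ring A] [Algebra R A]
    {X : Type} [AddCommGroup X] [Module R X] [Module A X] [IsScalarTower R A X] [Module.Finite R X]
    {Q : Type} [AddCommGroup Q] [Module R Q] [Module A Q] [IsScalarTower R A Q]
    [Module.Free R Q] [Module.Finite R Q]
    {f : K ⊗[R] X →ₗ[K ⊗[R] A] K ⊗[R] Q} (hf : f ≠ 0) :
    ∃ (h : X →ₗ[A] Q) (x : X) (ℓ : Q →ₗ[R] R), ℓ (h x) = 1 := by
  obtain ⟨c, h, hh, x, ℓ, hx⟩ :=
    exists_linearMap_smul_eq_one_tmul_of_ne_zero (LinearMap.restrictOneTmul_ne_zero hf)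
  refine ⟨{ h with map_smul' a y := Module.Flat.tensorProduct_mk_injective R Q K ?_ }, x, ℓ, hx⟩
  change (1 : K) ⊗ₜ[R] h (a • y) = (1 : K) ⊗ₜ[R] (a • h y)
  rw [hh, LinearMap.restrictOneTmul_smul, ← smulBC_tmul, hh, map_smul]

theorem LinearEquiv.toLinearMap_comp_eq_zero_iff {R M N P : Type*} [Ring R] [AddCommGroup M]
    [AddCommGroup N] [AddCommGroup P] [Module R M] [Module R N] [Module R P] (e : N ≃ₗ[R] P)
    {f : M →ₗ[R] N} : e.toLinearMap ∘ₗ f = 0 ↔ f = 0 :=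
  ⟨fun h => LinearMap.ext fun x => by simpa using congr(e.symm ($h x)),
    fun h => h ▸ LinearMap.comp_zero _⟩

section Reduction

variable {R : Type} [CommRing R] {A : Type} [Ring A] [Algebra R A]
  {Y : Type} [AddCommGroup Y] [Module R Y] [Module A Y] [IsScalarTower R A Y]

def Submodule.comapOneTmul {S : Type} [CommRing S] [Algebra R S]
    (M : Submodule (S ⊗[R] A) (S ⊗[R] Y)) : Submodule A Y where
  carrier := {y | (1 : S) ⊗ₜ[R] y ∈ M}
  add_mem' {y z} hy hz := by simpa only [Set.mem_ofPred_eq, tmul_add] using M.add_mem hy hz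
  zero_mem' := by simpa only [Set.mem_ofPred_eq, tmul_zero] using M.zero_mem
  smul_mem' a y hy := by
    simpa only [Set.mem_ofPred_eq, ← smulBC_tmul, ← one_tmul_smul] using M.smul_mem _ hy

theorem Submodule.mem_comapOneTmul {S : Type} [CommRing S] [Algebra R S]
    {M : Submodule (S ⊗[R] A) (S ⊗[R] Y)} {y : Y} :
    y ∈ M.comapOneTmul ↔ (1 : S) ⊗ₜ[R] y ∈ M := Iff.rfl

/-- Right exactness of `S ⊗[R] -`. -/
theorem Submodule.coe_ker_baseChangeTensor_mkQ (S : Type) [CommRing S] [Algebra R S]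
    (P : Submodule A Y) : (LinearMap.ker (P.mkQ.baseChangeTensor R S) : Set (S ⊗[R] Y)) =
      span S (TensorProduct.mk R S Y 1 '' P) := by
  have hexact : Function.Exact (P.restrictScalars R).subtype (P.mkQ.restrictScalars R) := by
    intro y
    simp
  ext m
  rw [SetLike.mem_coe, LinearMap.mem_ker, LinearMap.coe_baseChangeTensor,
    LinearMap.baseChange_eq_ltensor, lTensor_exact S hexact P.mkQ_surjective m,
    ← LinearMap.baseChange_eq_ltensor, ← LinearMap.coe_range, ← Submodule.baseChange,
    Submodule.baseChange_eq_span, Submodule.map_coe]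
  rfl

variable {K : Type} [Field K] [Algebra R K] [IsDomain R] [IsFractionRing R K]

theorem Submodule.coe_eq_span_comapOneTmul (M : Submodule (K ⊗[R] A) (K ⊗[R] Y)) :
    (M : Set (K ⊗[R] Y)) = span K (TensorProduct.mk R K Y 1 '' M.comapOneTmul) := by
  have : IsLocalizedModule (nonZeroDivisors R) (TensorProduct.mk R K Y 1) :=
    (isLocalizedModule_iff_isBaseChange _ K _).mpr (TensorProduct.isBaseChange R Y K)
  apply subset_antisymm
  · intro z hz
    obtain ⟨⟨y, r⟩, hr⟩ := IsLocalizedModule.surj (nonZeroDivisors R) (TensorProduct.mk R K Y 1) z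
    rw [Submonoid.smul_def, ← algebraMap_smul K, mk_apply] at hr
    have hr₀ : algebraMap R K r ≠ 0 := IsFractionRing.to_map_ne_zero_of_mem_nonZeroDivisors r.2
    have hy : y ∈ M.comapOneTmul := by
      rw [mem_comapOneTmul, ← hr]
      exact smul_mem_of_tensorProduct M _ hz
    rw [SetLike.mem_coe, ← inv_smul_smul₀ hr₀ z, hr]
    exact smul_mem _ _ (subset_span ⟨y, hy, rfl⟩)
  · intro z hz
    induction hz using Submodule.span_induction with
    | mem x hx => obtain ⟨y, hy, rfl⟩ := hx; exact hy
    | zero => exact M.zero_mem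
    | add _ _ _ _ hx hy => exact M.add_mem hx hy
    | smul c _ _ hx => exact smul_mem_of_tensorProduct M c hx

theorem Submodule.isTorsionFree_quotient_comapOneTmul (M : Submodule (K ⊗[R] A) (K ⊗[R] Y)) :
    Module.IsTorsionFree R (Y ⧸ M.comapOneTmul) := by
  refine .of_smul_eq_zero fun r q hrq => or_iff_not_imp_left.mpr fun hr => ?_
  obtain ⟨y, rfl⟩ := Submodule.Quotient.mk_surjective _ q
  rw [← Submodule.Quotient.mk_smul, Submodule.Quotient.mk_eq_zero, mem_comapOneTmul, tmul_smul,
    ← algebraMap_smul K] at hrq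
  have hr₀ : algebraMap R K r ≠ 0 := (map_ne_zero_iff _ (IsFractionRing.injective R K)).mpr hr
  rw [Submodule.Quotient.mk_eq_zero, mem_comapOneTmul, ← inv_smul_smul₀ hr₀ (1 ⊗ₜ y)]
  exact smul_mem_of_tensorProduct M _ hrq

end Reduction

theorem modular_reduction_of_hom_general
    (R : Type) [CommRing R] [IsDomain R] [IsDiscreteValuationRing R]
    (K : Type) [Field K] [Algebra R K] [IsFractionRing R K]
    (k : Type) [Field k] [Algebra R k]
    (A : Type) [Ring A] [Algebra R A]
    (X : Type) [AddCommGroup X] [Module R X] [Module A X] [IsScalarTower R A X]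
    [Module.Finite R X]
    (Y : Type) [AddCommGroup Y] [Module R Y] [Module A Y] [IsScalarTower R A Y]
    [Module.Finite R Y]
    (M : Submodule (K ⊗[R] A) (K ⊗[R] Y))
    (hHom : ∃ f : (K ⊗[R] X) →ₗ[K ⊗[R] A] ((K ⊗[R] Y) ⧸ M), f ≠ 0) :
    ∃ N : Submodule (k ⊗[R] A) (k ⊗[R] Y),
      (∃ g : (k ⊗[R] X) →ₗ[k ⊗[R] A] ((k ⊗[R] Y) ⧸ N), g ≠ 0) ∧
      -- moreover, `N` is the `p`-modular reduction of a lattice in `M`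
      ∃ L : Submodule R Y,
        (M : Set (K ⊗[R] Y)) =
          (Submodule.span K (⇑(TensorProduct.mk R K Y 1) '' (L : Set Y)) : Set (K ⊗[R] Y)) ∧
        (N : Set (k ⊗[R] Y)) =
          (Submodule.span k (⇑(TensorProduct.mk R k Y 1) '' (L : Set Y)) : Set (k ⊗[R] Y)) := by
  obtain ⟨f, hf⟩ := hHom
  set P := M.comapOneTmul
  have hM := M.coe_eq_span_comapOneTmul
  have hker : LinearMap.ker (P.mkQ.baseChangeTensor R K) = M :=
    SetLike.coe_injective ((P.coe_ker_baseChangeTensor_mkQ K).trans hM.symm)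
  have := M.isTorsionFree_quotient_comapOneTmul
  let eK := (P.mkQ.baseChangeTensor R K).quotKerEquivOfSurjective
    (LinearMap.baseChangeTensor_surjective P.mkQ_surjective)
  let ek := (P.mkQ.baseChangeTensor R k).quotKerEquivOfSurjective
    (LinearMap.baseChangeTensor_surjective P.mkQ_surjective)
  obtain ⟨h, x, ℓ, hx⟩ := exists_linearMap_apply_eq_one_of_ne_zero
    (f := ((Submodule.quotEquivOfEq _ _ hker.symm).trans eK).toLinearMap ∘ₗ f)
    ((LinearEquiv.toLinearMap_comp_eq_zero_iff _).not.mpr hf)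
  exact ⟨_, ⟨ek.symm.toLinearMap ∘ₗ h.baseChangeTensor R k,
    (LinearEquiv.toLinearMap_comp_eq_zero_iff _).not.mpr (h.baseChangeTensor_ne_zero hx)⟩,
    P.restrictScalars R, hM, P.coe_ker_baseChangeTensor_mkQ k⟩

theorem modular_reduction_of_hom
    (R : Type) [CommRing R] [IsDomain R] [IsDiscreteValuationRing R]
    (K : Type) [Field K] [Algebra R K] [IsFractionRing R K]
    (k : Type) [Field k] [Algebra R k]
    (hsurj : Function.Surjective (algebraMap R k))
    (hker : RingHom.ker (algebraMap R k) = IsLocalRing.maximalIdeal R)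
    (A : Type) [Ring A] [Algebra R A] [Module.Free R A] [Module.Finite R A]
    (X : Type) [AddCommGroup X] [Module R X] [Module A X] [IsScalarTower R A X]
    [Module.Free R X] [Module.Finite R X]
    (Y : Type) [AddCommGroup Y] [Module R Y] [Module A Y] [IsScalarTower R A Y]
    [Module.Free R Y] [Module.Finite R Y]
    (M : Submodule (K ⊗[R] A) (K ⊗[R] Y))
    (hHom : ∃ f : (K ⊗[R] X) →ₗ[K ⊗[R] A] ((K ⊗[R] Y) ⧸ M), f ≠ 0) :
    ∃ N : Submodule (k ⊗[R] A) (k ⊗[R] Y),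
      (∃ g : (k ⊗[R] X) →ₗ[k ⊗[R] A] ((k ⊗[R] Y) ⧸ N), g ≠ 0) ∧
      -- moreover, `N` is the `p`-modular reduction of a lattice in `M`
      ∃ L : Submodule R Y,
        (M : Set (K ⊗[R] Y)) =
          (Submodule.span K (⇑(TensorProduct.mk R K Y 1) '' (L : Set Y)) : Set (K ⊗[R] Y)) ∧
        (N : Set (k ⊗[R] Y)) =
          (Submodule.span k (⇑(TensorProduct.mk R k Y 1) '' (L : Set Y)) : Set (k ⊗[R] Y)) :=
  modular_reduction_of_hom_general R K k A X Y M hHom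
end

section
/- Let δ be an integer and μ a partition. There is at most one partition λ with (μ,λ) a δ-pair. Explicitly: if λ and ν are both obtained from μ by adding a horizontal strip to a single row so that the last added node has content δ - |μ|, then λ = ν. -/
/-- A partition: a weakly decreasing, finitely supported sequence of non-negative integers.
`parts i` is the `(i+1)`-st part `λ_{i+1}` (rows are 0-indexed in Lean). -/
structure Partn where
  parts : ℕ → ℕ
  antitone : Antitone parts
  finite_support : (Function.support parts).Finite

/-- The size `|λ|` of a partition. -/
noncomputable def Partn.size (l : Partn) : ℕ := ∑ᶠ i, l.parts i

/-- `(μ, λ)` is a `δ`-pair via (0-indexed) row `i`: `λ` is obtained from `μ` by adding nodes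
in row `i+1` only, and the last node of that row, the node `(i+1, λ_{i+1})`, has content
`λ_{i+1} - (i+1) = δ - |μ|`. -/
def IsDeltaPairRow (δ : ℤ) (μ l : Partn) (i : ℕ) : Prop :=
  (∀ j, j ≠ i → l.parts j = μ.parts j) ∧ μ.parts i < l.parts i ∧
    (l.parts i : ℤ) - (i + 1) = δ - (μ.size : ℤ)

/-- `(μ, λ)` is a `δ`-pair, written `μ ↪_δ λ`. -/
def IsDeltaPair (δ : ℤ) (μ l : Partn) : Prop := ∃ i, IsDeltaPairRow δ μ l i

/-! Two `δ`-pairs `(μ, λ)` and `(μ, ν)` add their nodes in rows with the same last content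
`δ - |μ|`. If `ν` grew a lower row `j > i` than the row `i` of `λ`, then
`ν_j ≤ ν_i = μ_i < λ_i` together with `j > i` would give `ν_j - (j+1) < λ_i - (i+1)`.
So both grow the same row, to the same length fixed by the content. -/

theorem Partn.ext {l ν : Partn} (h : l.parts = ν.parts) : l = ν := by
  cases l
  cases ν
  cases h
  rfl

namespace IsDeltaPairRow

variable {δ : ℤ} {μ l ν : Partn} {i j : ℕ}

theorem row_le (hl : IsDeltaPairRow δ μ l i) (hν : IsDeltaPairRow δ μ ν j) : i ≤ j := by
  obtain ⟨hl_other, hl_grow, hl_content⟩ := hl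
  obtain ⟨-, hν_grow, hν_content⟩ := hν
  by_contra! hji
  have hl_le : l.parts i ≤ l.parts j := l.antitone hji.le
  have hl_j : l.parts j = μ.parts j := hl_other j hji.ne
  omega

theorem row_eq (hl : IsDeltaPairRow δ μ l i) (hν : IsDeltaPairRow δ μ ν j) : i = j :=
  le_antisymm (hl.row_le hν) (hν.row_le hl)

theorem parts_eq (hl : IsDeltaPairRow δ μ l i) (hν : IsDeltaPairRow δ μ ν i) :
    l.parts = ν.parts := by
  obtain ⟨hl_other, -, hl_content⟩ := hl
  obtain ⟨hν_other, -, hν_content⟩ := hν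
  funext k
  by_cases hk : k = i
  · subst hk
    omega
  · rw [hl_other k hk, hν_other k hk]

end IsDeltaPairRow

/-- For a fixed `δ` and partition `μ`, there is at most one partition `λ`
such that `(μ,λ)` is a `δ`-pair. -/
theorem deltaPair_unique (δ : ℤ) (μ l ν : Partn)
    (hl : IsDeltaPair δ μ l) (hν : IsDeltaPair δ μ ν) : l = ν := by
  obtain ⟨i, hl⟩ := hl
  obtain ⟨j, hν⟩ := hν
  obtain rfl := hl.row_eq hν
  exact Partn.ext (hl.parts_eq hν)
end

section
/- Let p > 2 be prime and δ = p - 1, n = p. A partition λ with |λ| ≤ p satisfies Γ_δ(λ,p) = Γ_δ(∅,p) = (1,1,...,1,2) if and only if λ has empty p-core (equivalently, λ = ∅ or λ is a hook partition of p). -/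
/-- `Γ(λ,b)_i`: the number of beads of the abacus of `λ` with `b` beads and `p` runners
lying on runner `i`; bead `j` (for `j = 0, …, b-1`) sits in position
`β(λ,b)_j = λ_{j+1} - (j+1) + b`. -/
def Gamma (p : ℕ) (l : Partn) (b : ℕ) (i : ℕ) : ℕ :=
  (Finset.univ.filter fun j : Fin b => (l.parts j + (b - (j + 1))) % p = i).card

/-- The runner-count vector `Γ_δ(λ,b)` of the `δ`-marked abacus: the bead counts `Γ(λ,b)`,
with an extra `1` added on the marked runner `v_λ ≡ δ - |λ| + b (mod p)`. -/
noncomputable def GammaDelta (p : ℕ) (δ : ℤ) (l : Partn) (b : ℕ) (i : ℕ) : ℕ :=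
  Gamma p l b i + if (δ - (l.size : ℤ) + b) % p = i then 1 else 0

/-- `λ` is the hook partition `(p-m, 1^m)` of `p`. -/
def IsHook (p m : ℕ) (l : Partn) : Prop :=
  l.parts 0 = p - m ∧ (∀ i, 1 ≤ i → i ≤ m → l.parts i = 1) ∧ ∀ i, m < i → l.parts i = 0

/-!
Place the `p` beads of `λ` at `β_j = λ_{j+1} + p - 1 - j`. These are distinct, and `|λ| ≤ p`
puts them below `2p`. If they meet every runner exactly once, their residues sum to
`0 + ⋯ + (p-1)`, which is also the sum of the `β_j` minus `λ_1 + ⋯ + λ_p`; hence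
`λ_1 + ⋯ + λ_p = p · #{j | β_j ≥ p}`, which forces `λ = ∅` or `|λ| = p` with a single bead
above the first row, i.e. `λ_2 ≤ 1`: a hook. For the marked abacus, `v_λ = p - 1` when
`|λ| ∈ {0, p}`; otherwise `|λ| < p`, every bead lies below `2p - 1`, and runner `p - 1` holds at
most the bead at `p - 1`, so the mark cannot be compensated elsewhere.
-/

open Finset

lemma mod_eq_sub_of_le_of_lt {x p : ℕ} (h₁ : p ≤ x) (h₂ : x < 2 * p) : x % p = x - p := by
  rw [Nat.mod_eq_sub_mod h₁, Nat.mod_eq_of_lt (by omega)]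

section Fibers

variable {α : Type*} [Fintype α] {n : ℕ} {f : α → ℕ}

lemma image_univ_eq_range_of_injective (hcard : Fintype.card α = n) (hf : ∀ x, f x < n)
    (hinj : Function.Injective f) : univ.image f = range n :=
  eq_of_subset_of_card_le (fun _ hy => by obtain ⟨x, -, rfl⟩ := mem_image.1 hy; simpa using hf x)
    (by rw [card_image_of_injective _ hinj, card_range, card_univ, hcard])

lemma card_fiber_eq_one_iff_injective (hcard : Fintype.card α = n) (hf : ∀ x, f x < n) :
    (∀ i < n, #{x | f x = i} = 1) ↔ Function.Injective f := by
  constructor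
  · intro h a b hab
    exact card_le_one.1 (h _ (hf a)).le a (by simp) b (by simp [hab])
  · intro hinj i hi
    rw [← mem_range, ← image_univ_eq_range_of_injective hcard hf hinj] at hi
    obtain ⟨x, -, hx⟩ := mem_image.1 hi
    refine card_eq_one.2 ⟨x, ?_⟩
    ext y
    simp only [mem_filter, mem_univ, true_and, mem_singleton]
    exact ⟨fun hy => hinj (hy.trans hx.symm), fun hy => hy ▸ hx⟩

lemma sum_eq_sum_range_of_injective (hcard : Fintype.card α = n) (hf : ∀ x, f x < n)
    (hinj : Function.Injective f) : ∑ x, f x = ∑ i ∈ range n, i := by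
  rw [← image_univ_eq_range_of_injective hcard hf hinj, sum_image fun x _ y _ h => hinj h]

end Fibers

namespace Partn

variable (l : Partn)

/-- The bead position `β(λ,b)_j`. -/
def beta (b j : ℕ) : ℕ := l.parts j + (b - (j + 1))

lemma gamma_eq (p b i : ℕ) : Gamma p l b i = #{j : Fin b | l.beta b j % p = i} := rfl

lemma beta_lt_beta {b i j : ℕ} (hij : i < j) (hj : j < b) : l.beta b j < l.beta b i := by
  have := l.antitone hij.le
  simp only [beta]
  omega

lemma beta_strictAnti (b : ℕ) : StrictAnti fun j : Fin b => l.beta b j :=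
  fun _ j hij => l.beta_lt_beta hij j.isLt

lemma sum_range_le_size (n : ℕ) : ∑ j ∈ range n, l.parts j ≤ l.size := by
  classical
  rw [size, finsum_eq_sum_of_support_subset _ (s := l.finite_support.toFinset ∪ range n)
    fun _ hx => mem_coe.2 (mem_union_left _ (l.finite_support.mem_toFinset.2 hx))]
  exact sum_le_sum_of_subset subset_union_right

lemma parts_le_size (j : ℕ) : l.parts j ≤ l.size :=
  (single_le_sum (fun _ _ => Nat.zero_le _) (self_mem_range_succ j)).trans
    (l.sum_range_le_size (j + 1))

variable {l}

lemma size_eq_sum_range {n : ℕ} (h : ∀ j, n ≤ j → l.parts j = 0) :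
    l.size = ∑ j ∈ range n, l.parts j := by
  refine finsum_eq_sum_of_support_subset _ fun j hj => ?_
  by_contra hjn
  exact hj (h j (by simpa using hjn))

lemma size_eq_zero (h : ∀ j, l.parts j = 0) : l.size = 0 := by
  simp [size_eq_sum_range (n := 0) fun j _ => h j]

lemma isHook_of_parts_one_le_one (h₁ : l.parts 1 ≤ 1) :
    IsHook l.size (l.size - l.parts 0) l := by
  have hle : ∀ j, 1 ≤ j → l.parts j ≤ 1 := fun j hj => (l.antitone hj).trans h₁
  have hlong : ∀ i, 1 ≤ l.parts i → l.parts 0 + i ≤ l.size := fun i hi => by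
    have : i ≤ ∑ j ∈ range i, l.parts (j + 1) := by
      simpa using card_nsmul_le_sum (range i) (fun j => l.parts (j + 1)) 1 fun j hj =>
        hi.trans (l.antitone (by simpa using hj))
    have := l.sum_range_le_size (i + 1)
    rw [sum_range_succ'] at this
    omega
  have hshort : ∀ i, 1 ≤ i → l.parts i = 0 → l.size < l.parts 0 + i := fun i hi h0 => by
    have : ∑ j ∈ range (i - 1), l.parts (j + 1) ≤ i - 1 := by
      simpa using sum_le_card_nsmul (range (i - 1)) (fun j => l.parts (j + 1)) 1
        fun j _ => hle _ (by omega)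
    have htail : ∀ j, i ≤ j → l.parts j = 0 := fun j hj => by
      have := l.antitone hj; omega
    rw [size_eq_sum_range htail, show i = i - 1 + 1 by omega, sum_range_succ']
    omega
  refine ⟨by have := l.parts_le_size 0; omega, fun i hi him => ?_, fun i hmi => ?_⟩
  · have := hle i hi
    by_contra h
    have := hshort i hi (by omega)
    omega
  · by_contra h
    have := hlong i (by omega)
    omega

end Partn

open Partn

section Hook

variable {l : Partn}

lemma IsHook.size_eq {n m : ℕ} (hm : m ≤ n) (h : IsHook n m l) : l.size = n := by
  obtain ⟨h₀, h₁, h₂⟩ := h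
  rw [size_eq_sum_range (n := m + 1) fun j hj => h₂ j (by omega), sum_range_succ', h₀,
    sum_congr rfl fun j hj => h₁ (j + 1) (by omega) (by simpa using hj),
    sum_const, card_range, smul_eq_mul, mul_one]
  omega

lemma IsHook.beta_mod {p m : ℕ} (hm : m < p) (h : IsHook p m l) {j : ℕ} (hj : j < p) :
    l.beta p j % p = if j = 0 then p - 1 - m else if j ≤ m then p - j else p - 1 - j := by
  obtain ⟨h₀, h₁, h₂⟩ := h
  rcases Nat.eq_zero_or_pos j with rfl | hj₀
  · rw [beta, h₀, mod_eq_sub_of_le_of_lt (by omega) (by omega)]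
    rw [if_pos rfl]
    omega
  rcases le_or_gt j m with hjm | hjm
  · rw [beta, h₁ j hj₀ hjm, Nat.mod_eq_of_lt (by omega), if_neg (by omega), if_pos hjm]
    omega
  · rw [beta, h₂ j hjm, Nat.mod_eq_of_lt (by omega), if_neg (by omega), if_neg (by omega)]
    omega

end Hook

section Abacus

variable {p : ℕ} {l : Partn}

lemma gamma_eq_one_iff_injective (hp : 0 < p) :
    (∀ i < p, Gamma p l p i = 1) ↔ Function.Injective fun j : Fin p => l.beta p j % p :=
  card_fiber_eq_one_iff_injective (Fintype.card_fin p) fun _ => Nat.mod_lt _ hp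

/-- The marked runner `v_λ`. -/
noncomputable def markedRunner (p : ℕ) (δ : ℤ) (l : Partn) (b : ℕ) : ℤ :=
  (δ - (l.size : ℤ) + b) % p

lemma gammaDelta_eq (δ : ℤ) (b i : ℕ) :
    GammaDelta p δ l b i = Gamma p l b i + if markedRunner p δ l b = i then 1 else 0 := rfl

lemma sum_parts_eq_mul_sum_div (hp : 0 < p)
    (hinj : Function.Injective fun j : Fin p => l.beta p j % p) :
    ∑ j ∈ range p, l.parts j = p * ∑ j ∈ range p, l.beta p j / p := by
  have hres : ∑ j ∈ range p, l.beta p j % p = ∑ i ∈ range p, i := by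
    rw [← Fin.sum_univ_eq_sum_range (fun j => l.beta p j % p)]
    exact sum_eq_sum_range_of_injective (Fintype.card_fin p) (fun _ => Nat.mod_lt _ hp) hinj
  have hgaps : ∑ j ∈ range p, (p - (j + 1)) = ∑ i ∈ range p, i := by
    rw [← sum_range_reflect]
    exact sum_congr rfl fun j hj => by rw [mem_range] at hj; omega
  have hbeta : ∑ j ∈ range p, l.beta p j = ∑ j ∈ range p, l.parts j + ∑ i ∈ range p, i := by
    simp only [beta, sum_add_distrib, hgaps]
  have hdivmod : ∑ j ∈ range p, l.beta p j
      = p * ∑ j ∈ range p, l.beta p j / p + ∑ j ∈ range p, l.beta p j % p := by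
    rw [mul_sum, ← sum_add_distrib]
    exact sum_congr rfl fun j _ => (Nat.div_add_mod _ p).symm
  omega

lemma eq_zero_or_isHook_of_injective (hp : 2 ≤ p) (hl : l.size ≤ p)
    (hinj : Function.Injective fun j : Fin p => l.beta p j % p) :
    (∀ i, l.parts i = 0) ∨ ∃ m, m ≤ p - 1 ∧ IsHook p m l := by
  rcases Nat.eq_zero_or_pos (l.parts 0) with h₀ | h₀
  · exact Or.inl fun i => by have := l.antitone (Nat.zero_le i); omega
  right
  have hsum := sum_parts_eq_mul_sum_div (by omega) hinj
  have hfirst : l.parts 0 ≤ ∑ j ∈ range p, l.parts j :=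
    single_le_sum (fun _ _ => Nat.zero_le _) (mem_range.2 (by omega))
  have hprefix := l.sum_range_le_size p
  have hQ : ∑ j ∈ range p, l.beta p j / p = 1 := by
    have hle : ∑ j ∈ range p, l.beta p j / p ≤ 1 :=
      Nat.le_of_mul_le_mul_left (by omega) (by omega : 0 < p)
    have hpos : ∑ j ∈ range p, l.beta p j / p ≠ 0 := fun h0 => by
      rw [h0, mul_zero] at hsum
      omega
    omega
  rw [hQ, mul_one] at hsum
  have hsize : l.size = p := by omega
  have hsecond : l.beta p 1 / p = 0 := by
    have h01 := add_le_sum (f := fun j => l.beta p j / p) (fun _ _ => Nat.zero_le _)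
      (mem_range.2 (by omega : 0 < p)) (mem_range.2 (by omega : 1 < p)) zero_ne_one
    have := Nat.div_le_div_right (c := p) (l.beta_lt_beta zero_lt_one (by omega : 1 < p)).le
    simp only [hQ] at h01
    have := Nat.zero_le (l.beta p 1 / p)
    omega
  have h₁ : l.parts 1 ≤ 1 := by
    rw [Nat.div_eq_zero_iff, beta] at hsecond
    omega
  exact ⟨p - l.parts 0, by omega, hsize ▸ isHook_of_parts_one_le_one h₁⟩

lemma injective_of_eq_zero (h : ∀ i, l.parts i = 0) :
    Function.Injective fun j : Fin p => l.beta p j % p := by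
  intro a b hab
  have hlt : ∀ j : Fin p, l.beta p j < p := fun j => by
    simp only [beta, h]
    omega
  dsimp only at hab
  rw [Nat.mod_eq_of_lt (hlt a), Nat.mod_eq_of_lt (hlt b)] at hab
  exact (l.beta_strictAnti p).injective hab

lemma IsHook.injective {m : ℕ} (hm : m < p) (h : IsHook p m l) :
    Function.Injective fun j : Fin p => l.beta p j % p := by
  intro a b hab
  dsimp only at hab
  rw [h.beta_mod hm a.isLt, h.beta_mod hm b.isLt] at hab
  ext
  split_ifs at hab <;> omega

lemma gamma_eq_one_iff (hp : 2 ≤ p) (hl : l.size ≤ p) :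
    (∀ i < p, Gamma p l p i = 1) ↔ (∀ i, l.parts i = 0) ∨ ∃ m, m ≤ p - 1 ∧ IsHook p m l := by
  rw [gamma_eq_one_iff_injective (by omega)]
  refine ⟨eq_zero_or_isHook_of_injective hp hl, ?_⟩
  rintro (h | ⟨m, hm, h⟩)
  · exact injective_of_eq_zero h
  · exact h.injective (by omega)

lemma gamma_pred_le_one (hl : l.size < p) : Gamma p l p (p - 1) ≤ 1 := by
  have hbead : ∀ j : Fin p, l.beta p j % p = p - 1 → l.beta p j = p - 1 := fun j hj => by
    have := l.parts_le_size j
    rcases Nat.lt_or_ge (l.beta p j) p with hlt | hge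
    · rwa [Nat.mod_eq_of_lt hlt] at hj
    · rw [mod_eq_sub_of_le_of_lt hge (by simp only [beta]; omega)] at hj
      simp only [beta] at hj hge
      omega
  rw [gamma_eq]
  refine card_le_one.2 fun a ha b hb => (l.beta_strictAnti p).injective ?_
  simp only [mem_filter, mem_univ, true_and] at ha hb
  exact (hbead a ha).trans (hbead b hb).symm

lemma markedRunner_eq_of_size (hp : 0 < p) (h : l.size = 0 ∨ l.size = p) :
    markedRunner p (p - 1) l p = ((p - 1 : ℕ) : ℤ) := by
  have hpred : ((p : ℤ) - 1) % p = p - 1 := Int.emod_eq_of_lt (by omega) (by omega)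
  rw [markedRunner, Nat.cast_pred hp]
  rcases h with h | h <;> rw [h]
  · simpa using hpred
  · simpa using hpred

lemma gammaDelta_eq_iff (hv : markedRunner p (p - 1) l p = ((p - 1 : ℕ) : ℤ)) :
    (∀ i < p, GammaDelta p ((p : ℤ) - 1) l p i = if i = p - 1 then 2 else 1) ↔
      ∀ i < p, Gamma p l p i = 1 := by
  simp only [gammaDelta_eq, hv, Nat.cast_inj]
  refine forall₂_congr fun i _ => ?_
  by_cases hi : i = p - 1 <;> simp [hi, eq_comm]

lemma markedRunner_eq_of_gammaDelta (hp : 0 < p) (hl : l.size ≤ p)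
    (h : ∀ i < p, GammaDelta p ((p : ℤ) - 1) l p i = if i = p - 1 then 2 else 1) :
    markedRunner p (p - 1) l p = ((p - 1 : ℕ) : ℤ) := by
  rcases hl.lt_or_eq with hl | hl
  · by_contra hv
    have := h (p - 1) (by omega)
    rw [gammaDelta_eq, if_neg hv, if_pos rfl] at this
    have := gamma_pred_le_one hl
    omega
  · exact markedRunner_eq_of_size hp (Or.inr hl)

end Abacus

theorem markedAbacus_eq_iff_empty_pCore_general
    (p : ℕ) (hp : p.Prime) (l : Partn) (hl : l.size ≤ p) :
    ((∀ i, i < p → GammaDelta p ((p : ℤ) - 1) l p i = if i = p - 1 then 2 else 1) ↔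
      (∀ i, i < p → Gamma p l p i = 1)) ∧
    ((∀ i, i < p → Gamma p l p i = 1) ↔
      ((∀ i, l.parts i = 0) ∨ ∃ m, m ≤ p - 1 ∧ IsHook p m l)) := by
  have hshape := gamma_eq_one_iff hp.two_le hl
  refine ⟨⟨fun h => (gammaDelta_eq_iff (markedRunner_eq_of_gammaDelta hp.pos hl h)).1 h,
    fun h => (gammaDelta_eq_iff (markedRunner_eq_of_size hp.pos ?_)).2 h⟩, hshape⟩
  rcases hshape.1 h with h₀ | ⟨m, hm, hhook⟩
  · exact Or.inl (size_eq_zero h₀)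
  · exact Or.inr (hhook.size_eq (by omega))

/-- Let `p > 2` be prime, `δ = p - 1`, `n = p`. A partition `λ` with
`|λ| ≤ p` satisfies `Γ_δ(λ,p) = Γ_δ(∅,p) = (1,…,1,2)` if and only if `λ` has empty
`p`-core, equivalently `λ = ∅` or `λ` is a hook partition of `p`. -/
theorem markedAbacus_eq_iff_empty_pCore
    (p : ℕ) (hp : p.Prime) (hp2 : 2 < p) (l : Partn) (hl : l.size ≤ p) :
    ((∀ i, i < p → GammaDelta p ((p : ℤ) - 1) l p i = if i = p - 1 then 2 else 1) ↔
      (∀ i, i < p → Gamma p l p i = 1)) ∧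
    ((∀ i, i < p → Gamma p l p i = 1) ↔
      ((∀ i, l.parts i = 0) ∨ ∃ m, m ≤ p - 1 ∧ IsHook p m l)) :=
  markedAbacus_eq_iff_empty_pCore_general p hp l hl
end

section
/- Let λ, μ be partitions with |λ|, |μ| ≤ n. Define ρ(δ) = (δ, -1, -2, ..., -n) and λ̂ = (-|λ|, λ_1, ..., λ_n). Then λ̂ + ρ(δ) and μ̂ + ρ(δ) are equal as multisets modulo p if and only if Γ_δ(λ,b) = Γ_δ(μ,b) for any b ≥ max(|λ|,|μ|), where Γ_δ is the runner-count vector of the δ-marked abacus. -/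
/-- The multiset of entries of `λ̂ + ρ(δ) = (δ - |λ|, λ_1 - 1, …, λ_n - n)`, reduced mod `p`. -/
noncomputable def hatRhoModP (p : ℕ) (δ : ℤ) (n : ℕ) (l : Partn) : Multiset (ZMod p) :=
  ((δ - (l.size : ℤ) : ℤ) : ZMod p) ::ₘ
    (Multiset.range n).map fun i => (((l.parts i : ℤ) - (i + 1) : ℤ) : ZMod p)

/-!
Translating every entry of `λ̂ + ρ(δ)` by `b` turns it into the list of positions of the
`δ`-marked abacus: the first entry becomes the marker position `δ - |λ| + b`, the others the
bead positions `λ_j - j + b`. Reading a multiset in `ZMod p` off its residue counts, equality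
of these multisets is equality of the runner counts `Γ_δ`. It remains to compare `n` entries
with `b` entries: once the length exceeds `|λ|`, the extra entries `-j` are the same for every
partition, so they cancel.
-/

namespace Partn

open Finset

theorem sum_range_parts_le_size (l : Partn) (k : ℕ) : ∑ j ∈ range k, l.parts j ≤ l.size := by
  classical
  let s := l.finite_support.toFinset ∪ range k
  calc ∑ j ∈ range k, l.parts j ≤ ∑ j ∈ s, l.parts j := sum_le_sum_of_subset subset_union_right
    _ = l.size := (finsum_eq_sum_of_support_subset _ (by simp [s])).symm

theorem parts_eq_zero_of_size_le (l : Partn) {i : ℕ} (h : l.size ≤ i) : l.parts i = 0 := by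
  by_contra hi
  have : i + 1 ≤ ∑ j ∈ range (i + 1), l.parts j := by
    simpa using card_nsmul_le_sum (range (i + 1)) l.parts 1 fun j hj =>
      (Nat.one_le_iff_ne_zero.mpr hi).trans (l.antitone (Nat.lt_succ_iff.mp (mem_range.mp hj)))
  have := l.sum_range_parts_le_size (i + 1)
  omega

end Partn

theorem ZMod.natCast_eq_natCast_iff_mod_eq {p i : ℕ} (hi : i < p) (x : ℕ) :
    (i : ZMod p) = x ↔ x % p = i := by
  rw [ZMod.natCast_eq_natCast_iff, Nat.ModEq, Nat.mod_eq_of_lt hi, eq_comm]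

theorem ZMod.natCast_eq_intCast_iff_emod_eq {p i : ℕ} (hi : i < p) (x : ℤ) :
    (i : ZMod p) = x ↔ x % p = i := by
  rw [← Int.cast_natCast, ZMod.intCast_eq_intCast_iff',
    Int.emod_eq_of_lt (by positivity) (by exact_mod_cast hi), eq_comm]

theorem ZMod.multiset_eq_iff_count_natCast_eq {p : ℕ} [NeZero p] {s t : Multiset (ZMod p)} :
    s = t ↔ ∀ i < p, s.count (i : ZMod p) = t.count (i : ZMod p) := by
  refine ⟨fun h i _ => h ▸ rfl, fun h => Multiset.ext.mpr fun x => ?_⟩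
  simpa [ZMod.natCast_zmod_val] using h x.val (ZMod.val_lt x)

theorem hatRhoModP_add (p : ℕ) (δ : ℤ) (l : Partn) {k : ℕ} (hk : l.size ≤ k) (d : ℕ) :
    hatRhoModP p δ (k + d) l = hatRhoModP p δ k l +
      (Multiset.range d).map fun j : ℕ => ((-((k + j + 1 : ℕ) : ℤ) : ℤ) : ZMod p) := by
  rw [hatRhoModP, hatRhoModP, Multiset.range_add, Multiset.map_add, Multiset.map_map,
    Multiset.cons_add]
  congr 2
  refine Multiset.map_congr rfl fun j _ => ?_
  simp [l.parts_eq_zero_of_size_le (hk.trans (Nat.le_add_right k j))]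

theorem hatRhoModP_eq_iff_of_le (p : ℕ) (δ : ℤ) {l m : Partn} {k K : ℕ}
    (hl : l.size ≤ k) (hm : m.size ≤ k) (hkK : k ≤ K) :
    hatRhoModP p δ k l = hatRhoModP p δ k m ↔ hatRhoModP p δ K l = hatRhoModP p δ K m := by
  obtain ⟨d, rfl⟩ := Nat.exists_eq_add_of_le hkK
  rw [hatRhoModP_add p δ l hl, hatRhoModP_add p δ m hm, add_left_inj]

noncomputable def markedAbacusModP (p : ℕ) (δ : ℤ) (l : Partn) (b : ℕ) : Multiset (ZMod p) :=
  ((δ - (l.size : ℤ) + b : ℤ) : ZMod p) ::ₘ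
    (Multiset.range b).map fun j => ((l.parts j + (b - (j + 1)) : ℕ) : ZMod p)

theorem map_add_hatRhoModP (p : ℕ) (δ : ℤ) (l : Partn) (b : ℕ) :
    (hatRhoModP p δ b l).map (· + (b : ZMod p)) = markedAbacusModP p δ l b := by
  rw [hatRhoModP, markedAbacusModP, Multiset.map_cons, Multiset.map_map]
  congr 1
  · push_cast; ring
  · refine Multiset.map_congr rfl fun j hj => ?_
    have hjb : j + 1 ≤ b := Multiset.mem_range.mp hj
    simp only [Function.comp_apply, Nat.cast_add, Nat.cast_sub hjb]
    push_cast
    ring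

theorem count_markedAbacusModP (p : ℕ) (δ : ℤ) (l : Partn) (b : ℕ) {i : ℕ} (hi : i < p) :
    (markedAbacusModP p δ l b).count (i : ZMod p) = GammaDelta p δ l b i := by
  classical
  rw [markedAbacusModP, Multiset.count_cons, Multiset.count_map, GammaDelta, Gamma,
    ← Finset.range_val, ← Finset.filter_val, Finset.card_val, Finset.card_filter,
    Finset.card_filter,
    Fin.sum_univ_eq_sum_range fun j => if (l.parts j + (b - (j + 1))) % p = i then 1 else 0]
  simp only [ZMod.natCast_eq_natCast_iff_mod_eq hi, ZMod.natCast_eq_intCast_iff_emod_eq hi]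

/-- For partitions `λ, μ` with `|λ|, |μ| ≤ n`, the tuples `λ̂ + ρ(δ)` and
`μ̂ + ρ(δ)` are equal as multisets modulo `p` if and only if the `δ`-marked abacus
runner-counts agree: `Γ_δ(λ,b) = Γ_δ(μ,b)`, for any `b ≥ max(|λ|,|μ|)`. -/
theorem hatRho_multiset_eq_iff_GammaDelta_eq
    (p : ℕ) (hp : p.Prime) (δ : ℤ) (n : ℕ) (l m : Partn)
    (hl : l.size ≤ n) (hm : m.size ≤ n) :
    ∀ b, max l.size m.size ≤ b →
      (hatRhoModP p δ n l = hatRhoModP p δ n m ↔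
        ∀ i, i < p → GammaDelta p δ l b i = GammaDelta p δ m b i) := by
  intro b hb
  have : NeZero p := ⟨hp.ne_zero⟩
  have hlb : l.size ≤ b := le_of_max_le_left hb
  have hmb : m.size ≤ b := le_of_max_le_right hb
  calc hatRhoModP p δ n l = hatRhoModP p δ n m
      ↔ hatRhoModP p δ (max n b) l = hatRhoModP p δ (max n b) m :=
        hatRhoModP_eq_iff_of_le p δ hl hm (le_max_left n b)
    _ ↔ hatRhoModP p δ b l = hatRhoModP p δ b m :=
        (hatRhoModP_eq_iff_of_le p δ hlb hmb (le_max_right n b)).symm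
    _ ↔ markedAbacusModP p δ l b = markedAbacusModP p δ m b := by
        rw [← map_add_hatRhoModP, ← map_add_hatRhoModP]
        exact (Multiset.map_injective (add_left_injective _)).eq_iff.symm
    _ ↔ ∀ i, i < p → GammaDelta p δ l b i = GammaDelta p δ m b i := by
        rw [ZMod.multiset_eq_iff_count_natCast_eq]
        refine forall₂_congr fun i hi => ?_
        rw [count_markedAbacusModP p δ l b hi, count_markedAbacusModP p δ m b hi]
end
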